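/- Let Φ = (a_{i,j}) ∈ ℝ^{n×N} satisfy the restricted isometry property of order 1 with constant 0 < δ < 1, i.e. (1−δ)‖x‖_{ℓ₂} ≤ ‖Φx‖_{ℓ₂} ≤ (1+δ)‖x‖_{ℓ₂} for every x ∈ ℝ^N having at most one nonzero coordinate. Then for every 1 ≤ p ≤ 2, (1−δ) · n^{−1/2} · N^{1−1/p} ≤ ‖Φ‖_{ℓ_p^N → ℓ_2^n} ≤ (1+δ) · N^{1−1/p}, where ‖Φ‖_{ℓ_p^N → ℓ_2^n} denotes the operator norm of Φ from (ℝ^N, ‖·‖_{ℓ_p}) to (ℝ^n, ‖·‖_{ℓ₂}). -/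

import Mathlib

/-!
Upper bound: expanding `x` in the standard basis,
`‖Φ x‖₂ ≤ (1 + δ) ‖x‖₁ ≤ (1 + δ) N^{1-1/p} ‖x‖_p`.

Lower bound: every column has norm at least `1 - δ`, so the squared Frobenius norm is at least
`(1 - δ)² N` and some row `z` has `‖z‖₂² ≥ (1 - δ)² N / n`. Testing `Φ` on `z / ‖z‖_p` and
reading off the coordinate of that row gives `‖Φ‖ ≥ ‖z‖₂² / ‖z‖_p ≥ N^{1/2-1/p} ‖z‖₂`, the last
step by the comparison `‖z‖_p ≤ N^{1/p-1/2} ‖z‖₂` valid for `p ≤ 2`.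
-/

/-- The ℓ_p norm on ℝ^m (for a real exponent p ≥ 1). -/
noncomputable def pNorm {m : ℕ} (p : ℝ) (x : Fin m → ℝ) : ℝ :=
  (∑ i, |x i| ^ p) ^ (1 / p)

/-- The operator norm of a linear map Φ : ℝ^N → ℝ^n from (ℝ^N, ‖·‖_{ℓ_p}) to (ℝ^n, ‖·‖_{ℓ₂}). -/
noncomputable def opNormP {N n : ℕ} (p : ℝ) (Φ : (Fin N → ℝ) →ₗ[ℝ] (Fin n → ℝ)) : ℝ :=
  sSup { t : ℝ | ∃ x : Fin N → ℝ, pNorm p x ≤ 1 ∧ t = pNorm 2 (Φ x) }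

section pNorm

variable {m : ℕ}

lemma pNorm_nonneg (p : ℝ) (x : Fin m → ℝ) : 0 ≤ pNorm p x := by
  unfold pNorm; positivity

lemma pNorm_smul {p : ℝ} (hp : p ≠ 0) (c : ℝ) (x : Fin m → ℝ) :
    pNorm p (c • x) = |c| * pNorm p x := by
  simp only [pNorm, Pi.smul_apply, smul_eq_mul, abs_mul,
    Real.mul_rpow (abs_nonneg c) (abs_nonneg _), ← Finset.mul_sum]
  rw [Real.mul_rpow (by positivity) (by positivity), ← Real.rpow_mul (abs_nonneg c),
    mul_one_div_cancel hp, Real.rpow_one]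

lemma pNorm_zero {p : ℝ} (hp : p ≠ 0) : pNorm p (0 : Fin m → ℝ) = 0 := by
  simpa using pNorm_smul hp 0 0

lemma pNorm_pos (p : ℝ) {x : Fin m → ℝ} (hx : x ≠ 0) : 0 < pNorm p x := by
  obtain ⟨j, hj⟩ := Function.ne_iff.mp hx
  have hsum : 0 < ∑ i, |x i| ^ p :=
    (Real.rpow_pos_of_pos (abs_pos.mpr hj) p).trans_le <|
      Finset.single_le_sum (f := fun i => |x i| ^ p) (fun i _ => by positivity)
        (Finset.mem_univ j)
  exact Real.rpow_pos_of_pos hsum _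

lemma pNorm_one (x : Fin m → ℝ) : pNorm 1 x = ∑ i, |x i| := by
  simp [pNorm]

lemma pNorm_two_eq_norm (x : Fin m → ℝ) : pNorm 2 x = ‖WithLp.toLp 2 x‖ := by
  rw [PiLp.norm_eq_sum (by norm_num)]
  simp [pNorm]

lemma pNorm_two_sq (x : Fin m → ℝ) : pNorm 2 x ^ 2 = x ⬝ᵥ x := by
  rw [pNorm_two_eq_norm, ← real_inner_self_eq_norm_sq, EuclideanSpace.inner_eq_star_dotProduct]
  simp

lemma abs_apply_le_pNorm_two (x : Fin m → ℝ) (i : Fin m) : |x i| ≤ pNorm 2 x := by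
  simpa [pNorm_two_eq_norm] using PiLp.norm_apply_le (WithLp.toLp 2 x) i

lemma pNorm_two_sum_le {ι : Type*} (s : Finset ι) (x : ι → Fin m → ℝ) :
    pNorm 2 (∑ k ∈ s, x k) ≤ ∑ k ∈ s, pNorm 2 (x k) := by
  simpa only [pNorm_two_eq_norm, WithLp.toLp_sum] using norm_sum_le s fun k => WithLp.toLp 2 (x k)

lemma pNorm_two_single_one (j : Fin m) : pNorm 2 (Pi.single j 1 : Fin m → ℝ) = 1 := by
  rw [pNorm_two_eq_norm, PiLp.toLp_single, PiLp.norm_single, norm_one]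

lemma pNorm_le_card_rpow_mul_pNorm {p q : ℝ} (hp : 0 < p) (hpq : p ≤ q) (x : Fin m → ℝ) :
    pNorm p x ≤ (m : ℝ) ^ (1 / p - 1 / q) * pNorm q x := by
  have hq : 0 < q := hp.trans_le hpq
  have hpow : ∀ i, (|x i| ^ p) ^ (q / p) = |x i| ^ q := fun i => by
    rw [← Real.rpow_mul (abs_nonneg _), mul_div_cancel₀ _ hp.ne']
  have h := Real.rpow_sum_le_const_mul_sum_rpow_of_nonneg (s := Finset.univ)
    (f := fun i => |x i| ^ p) ((one_le_div hp).mpr hpq) (fun i _ => by positivity)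
  simp only [hpow, Finset.card_univ, Fintype.card_fin] at h
  calc pNorm p x = ((∑ i, |x i| ^ p) ^ (q / p)) ^ (1 / q) := by
        rw [pNorm, ← Real.rpow_mul (by positivity)]; congr 1; field_simp
    _ ≤ ((m : ℝ) ^ (q / p - 1) * ∑ i, |x i| ^ q) ^ (1 / q) := by gcongr
    _ = (m : ℝ) ^ (1 / p - 1 / q) * pNorm q x := by
        rw [Real.mul_rpow (by positivity) (by positivity), ← Real.rpow_mul (by positivity)]
        congr 2
        field_simp

end pNorm

section opNormP

variable {N n : ℕ} {p C : ℝ} (Φ : (Fin N → ℝ) →ₗ[ℝ] (Fin n → ℝ))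

lemma opNormP_le (hp : p ≠ 0) (hC : ∀ x, pNorm p x ≤ 1 → pNorm 2 (Φ x) ≤ C) :
    opNormP p Φ ≤ C :=
  csSup_le ⟨_, 0, by simp [pNorm_zero hp], rfl⟩ (by rintro _ ⟨x, hx, rfl⟩; exact hC x hx)

/-- The bound `C` is needed because `sSup` of a set that is unbounded above is `0`. -/
lemma pNorm_two_apply_le_opNormP (hC : ∀ x, pNorm p x ≤ 1 → pNorm 2 (Φ x) ≤ C)
    {x : Fin N → ℝ} (hx : pNorm p x ≤ 1) : pNorm 2 (Φ x) ≤ opNormP p Φ :=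
  le_csSup ⟨C, by rintro _ ⟨y, hy, rfl⟩; exact hC y hy⟩ ⟨x, hx, rfl⟩

lemma pNorm_two_apply_le_mul_sum_abs (hcol : ∀ j, pNorm 2 (Φ (Pi.single j 1)) ≤ C)
    (x : Fin N → ℝ) : pNorm 2 (Φ x) ≤ C * ∑ j, |x j| :=
  calc pNorm 2 (Φ x) = pNorm 2 (∑ j, x j • Φ (Pi.single j 1)) := by
        conv_lhs => rw [pi_eq_sum_univ' x]
        simp only [map_sum, map_smul]
    _ ≤ ∑ j, pNorm 2 (x j • Φ (Pi.single j 1)) := pNorm_two_sum_le _ _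
    _ = ∑ j, |x j| * pNorm 2 (Φ (Pi.single j 1)) := by simp only [pNorm_smul two_ne_zero]
    _ ≤ ∑ j, |x j| * C := by gcongr with j; exact hcol j
    _ = C * ∑ j, |x j| := by rw [Finset.mul_sum]; simp only [mul_comm]

lemma pNorm_two_apply_le_mul_card_rpow (hp : 1 ≤ p) (hC : 0 ≤ C)
    (hcol : ∀ j, pNorm 2 (Φ (Pi.single j 1)) ≤ C) {x : Fin N → ℝ} (hx : pNorm p x ≤ 1) :
    pNorm 2 (Φ x) ≤ C * (N : ℝ) ^ (1 - 1 / p) :=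
  calc pNorm 2 (Φ x) ≤ C * pNorm 1 x := by
        rw [pNorm_one]; exact pNorm_two_apply_le_mul_sum_abs Φ hcol x
    _ ≤ C * ((N : ℝ) ^ (1 / 1 - 1 / p) * pNorm p x) := by
        gcongr; exact pNorm_le_card_rpow_mul_pNorm one_pos hp x
    _ ≤ C * (N : ℝ) ^ (1 - 1 / p) := by
        rw [div_one]; gcongr; exact mul_le_of_le_one_right (by positivity) hx

lemma exists_row_dotProduct_self_ge (A : Matrix (Fin n) (Fin N) ℝ) (hn : 0 < n) {c : ℝ}
    (hc : 0 ≤ c) (hcol : ∀ j, c ≤ pNorm 2 (A.col j)) :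
    ∃ i, c ^ 2 * N / n ≤ A.row i ⬝ᵥ A.row i := by
  have hsum : ∑ _i : Fin n, c ^ 2 * N / n ≤ ∑ i, A.row i ⬝ᵥ A.row i :=
    calc ∑ _i : Fin n, c ^ 2 * N / n = ∑ _j : Fin N, c ^ 2 := by
          simp only [Finset.sum_const, Finset.card_univ, Fintype.card_fin, nsmul_eq_mul]
          field_simp
      _ ≤ ∑ j, A.col j ⬝ᵥ A.col j := by
          gcongr with j
          rw [← pNorm_two_sq]
          exact pow_le_pow_left₀ hc (hcol j) 2
      _ = ∑ i, A.row i ⬝ᵥ A.row i := by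
          simp only [dotProduct, Matrix.row, Matrix.col, Matrix.transpose_apply]
          exact Finset.sum_comm
  obtain ⟨i, -, hi⟩ := Finset.exists_le_of_sum_le (Finset.univ_nonempty_iff.mpr ⟨⟨0, hn⟩⟩) hsum
  exact ⟨i, hi⟩

lemma row_dotProduct_self_le_opNormP_mul (hp : p ≠ 0)
    (hC : ∀ x, pNorm p x ≤ 1 → pNorm 2 (Φ x) ≤ C) (i : Fin n) :
    (LinearMap.toMatrix' Φ).row i ⬝ᵥ (LinearMap.toMatrix' Φ).row i ≤
      opNormP p Φ * pNorm p ((LinearMap.toMatrix' Φ).row i) := by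
  set z := (LinearMap.toMatrix' Φ).row i
  rcases eq_or_ne z 0 with hz | hz
  · simp [hz, pNorm_zero hp]
  have hr : 0 < pNorm p z := pNorm_pos p hz
  have hx : pNorm p ((pNorm p z)⁻¹ • z) = 1 := by
    rw [pNorm_smul hp, abs_of_pos (inv_pos.mpr hr), inv_mul_cancel₀ hr.ne']
  have happly : Φ ((pNorm p z)⁻¹ • z) i = (pNorm p z)⁻¹ * (z ⬝ᵥ z) := by
    rw [map_smul, ← LinearMap.toMatrix'_mulVec]
    rfl
  have h := (le_abs_self _).trans <| (abs_apply_le_pNorm_two _ i).trans <|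
    pNorm_two_apply_le_opNormP Φ hC hx.le
  rwa [happly, inv_mul_le_iff₀ hr, mul_comm] at h

lemma mul_rpow_le_opNormP_of_le_col {c : ℝ} (hn : 0 < n) (hN : 0 < N) (hp0 : 0 < p)
    (hp2 : p ≤ 2) (hc : 0 < c) (hcol : ∀ j, c ≤ pNorm 2 (Φ (Pi.single j 1)))
    (hC : ∀ x, pNorm p x ≤ 1 → pNorm 2 (Φ x) ≤ C) :
    c * (n : ℝ) ^ (-(1 : ℝ) / 2) * (N : ℝ) ^ (1 - 1 / p) ≤ opNormP p Φ := by
  set A := LinearMap.toMatrix' Φ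
  have hNpos : (0 : ℝ) < N := Nat.cast_pos.mpr hN
  obtain ⟨i, hi⟩ := exists_row_dotProduct_self_ge A hn hc.le fun j => by
    rw [← Matrix.mulVec_single_one, LinearMap.toMatrix'_mulVec]; exact hcol j
  set a := pNorm 2 (A.row i)
  rw [← pNorm_two_sq] at hi
  have ha : 0 < a :=
    (pNorm_nonneg 2 _).lt_of_ne' (sq_pos_iff.mp (lt_of_lt_of_le (by positivity) hi))
  have hop : 0 ≤ opNormP p Φ := (pNorm_nonneg 2 _).trans
    (pNorm_two_apply_le_opNormP Φ hC (x := 0) (by simp [pNorm_zero hp0.ne']))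
  have hupper : a ≤ opNormP p Φ * (N : ℝ) ^ (1 / p - 1 / 2) := by
    have h := (row_dotProduct_self_le_opNormP_mul Φ hp0.ne' hC i).trans <|
      mul_le_mul_of_nonneg_left (pNorm_le_card_rpow_mul_pNorm hp0 hp2 _) hop
    rw [← pNorm_two_sq, ← mul_assoc, sq] at h
    exact le_of_mul_le_mul_right h ha
  have hlower : c * (n : ℝ) ^ (-(1 : ℝ) / 2) * (N : ℝ) ^ (1 / 2 : ℝ) ≤ a := by
    refine le_of_pow_le_pow_left₀ two_ne_zero ha.le (le_of_eq_of_le ?_ hi)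
    rw [mul_pow, mul_pow, ← Real.rpow_mul_natCast (by positivity),
      ← Real.rpow_mul_natCast hNpos.le]
    norm_num [Real.rpow_neg_one, div_eq_mul_inv]
    ring
  calc c * (n : ℝ) ^ (-(1 : ℝ) / 2) * (N : ℝ) ^ (1 - 1 / p)
      = c * (n : ℝ) ^ (-(1 : ℝ) / 2) * (N : ℝ) ^ (1 / 2 : ℝ) * (N : ℝ) ^ (1 / 2 - 1 / p) := by
        rw [mul_assoc _ ((N : ℝ) ^ _), ← Real.rpow_add hNpos]; ring_nf
    _ ≤ opNormP p Φ * (N : ℝ) ^ (1 / p - 1 / 2) * (N : ℝ) ^ (1 / 2 - 1 / p) := by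
        gcongr ?_ * _; exact hlower.trans hupper
    _ = opNormP p Φ := by
        rw [mul_assoc, ← Real.rpow_add hNpos]; ring_nf; simp

end opNormP

/-- If Φ ∈ ℝ^{n×N} satisfies the restricted isometry property of order 1 with
constant 0 < δ < 1, then for 1 ≤ p ≤ 2,
(1−δ) n^{−1/2} N^{1−1/p} ≤ ‖Φ‖_{ℓ_p^N → ℓ_2^n} ≤ (1+δ) N^{1−1/p}. -/
theorem stmt18 {n N : ℕ} (hn : 0 < n) (hN : 0 < N)
    (Φ : (Fin N → ℝ) →ₗ[ℝ] (Fin n → ℝ)) (δ : ℝ) (hδ0 : 0 < δ) (hδ1 : δ < 1)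
    (hRIP : ∀ x : Fin N → ℝ, {i | x i ≠ 0}.Subsingleton →
      (1 - δ) * pNorm 2 x ≤ pNorm 2 (Φ x) ∧ pNorm 2 (Φ x) ≤ (1 + δ) * pNorm 2 x)
    (p : ℝ) (hp1 : 1 ≤ p) (hp2 : p ≤ 2) :
    (1 - δ) * (n : ℝ) ^ (-(1 : ℝ) / 2) * (N : ℝ) ^ (1 - 1 / p) ≤ opNormP p Φ ∧
    opNormP p Φ ≤ (1 + δ) * (N : ℝ) ^ (1 - 1 / p) := by
  have hp0 : 0 < p := zero_lt_one.trans_le hp1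
  have hcol (j : Fin N) :
      1 - δ ≤ pNorm 2 (Φ (Pi.single j 1)) ∧ pNorm 2 (Φ (Pi.single j 1)) ≤ 1 + δ := by
    simpa [pNorm_two_single_one] using
      hRIP (Pi.single j 1) (Set.subsingleton_singleton.anti Pi.support_single_subset)
  have hbound {x : Fin N → ℝ} (hx : pNorm p x ≤ 1) :
      pNorm 2 (Φ x) ≤ (1 + δ) * (N : ℝ) ^ (1 - 1 / p) :=
    pNorm_two_apply_le_mul_card_rpow Φ hp1 (by linarith) (fun j => (hcol j).2) hx
  exact ⟨mul_rpow_le_opNormP_of_le_col Φ hn hN hp0 hp2 (by linarith)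
      (fun j => (hcol j).1) fun _ => hbound,
    opNormP_le Φ hp0.ne' fun _ => hbound⟩
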